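/- Let F : ℝⁿ → ℝⁿ be the deterministic Shapley operator F = A^♯ ∘ B associated with matrices A, B ∈ T^{m×n} whose finite entries are integers, every column of A and every row of B having at least one finite entry, i.e., F(x)_j = min_{i : A_{ij} ≠ −∞} ( −A_{ij} + max_{h : B_{ih} ≠ −∞} ( B_{ih} + x_h ) ). Let W := max{ |A_{ij} − B_{ih}| : A_{ij} ≠ −∞, B_{ih} ≠ −∞ } (the maximizing set being assumed nonempty). Suppose there exists v₀ ∈ ℝⁿ and ρ ∈ ℝ with F(v₀) = ρ + v₀. Then inf{ ‖u‖_H : u ∈ ℝⁿ, F(u) = ρ + u } ≤ (n − 1) · ( |ρ| + W ). -/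

import Mathlib

/-!
Put `K = |ρ| + W`, so that `|ρ + A_{ij} - B_{ih}| ≤ K` whenever both entries are finite. If `u` is a
bias vector and `φ : ℝ → ℝ` changes every difference of coordinates of `u` by at most the
tolerance `K` allows, i.e. `min K (u_j - u_h) ≤ φ (u_j) - φ (u_h)`, then `φ ∘ u` is again a
bias vector: the indices attaining the outer min and the inner maxima for `u` still certify both
inequalities for `φ ∘ u`. Such a `φ` is obtained by shrinking every gap between consecutive values
of `u` to at most `K`; concretely `φ x` is the Lebesgue measure of `(⋃ l, (u_l, u_l + K]) ∩ (-∞, x]`.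
The values of `φ ∘ u` then lie in an interval of length at most `(n - 1) K`.
-/

noncomputable section

variable {m n : ℕ}

/-- The real value of a finite element of `T = ℝ ∪ {-∞}` (junk value `0` at `-∞`). -/
def sval (a : WithBot ℝ) : ℝ := a.unbotD 0

/-- The deterministic Shapley operator `F = A^♯ ∘ B : ℝⁿ → ℝⁿ`,
`F(x)_j = min_{i : A_{ij} ≠ -∞} ( -A_{ij} + max_{h : B_{ih} ≠ -∞} ( B_{ih} + x_h ) )`. -/
def dshapley (A B : Fin m → Fin n → WithBot ℝ) (x : Fin n → ℝ) : Fin n → ℝ := fun j =>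
  sInf {r : ℝ | ∃ i, A i j ≠ ⊥ ∧
    r = - sval (A i j) + sSup {s : ℝ | ∃ h, B i h ≠ ⊥ ∧ s = sval (B i h) + x h}}

/-- `W = max { |A_{ij} - B_{ih}| : A_{ij} ≠ -∞, B_{ih} ≠ -∞ }`. -/
def maxW (A B : Fin m → Fin n → WithBot ℝ) : ℝ :=
  sSup {w : ℝ | ∃ i j h, A i j ≠ ⊥ ∧ B i h ≠ ⊥ ∧ w = |sval (A i j) - sval (B i h)|}

/-- Hilbert's seminorm `‖x‖_H = max_i x_i - min_i x_i` on `ℝⁿ`. -/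
def hnorm (x : Fin n → ℝ) : ℝ := (⨆ i, x i) - (⨅ i, x i)

open Set MeasureTheory

lemma Set.finite_setOf_exists_and_eq {ι : Type*} [Finite ι] (p : ι → Prop) (f : ι → ℝ) :
    {r : ℝ | ∃ i, p i ∧ r = f i}.Finite :=
  (finite_range f).subset (by rintro _ ⟨i, -, rfl⟩; exact ⟨i, rfl⟩)

lemma Set.exists_sSup_setOf_exists_and_eq {ι : Type*} [Finite ι] {p : ι → Prop} (f : ι → ℝ)
    (hp : ∃ i, p i) : ∃ i, p i ∧ sSup {r : ℝ | ∃ i, p i ∧ r = f i} = f i :=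
  Set.Nonempty.csSup_mem (s := {r : ℝ | ∃ i, p i ∧ r = f i}) (let ⟨i, hi⟩ := hp; ⟨_, i, hi, rfl⟩)
    (finite_setOf_exists_and_eq p f)

lemma Set.exists_sInf_setOf_exists_and_eq {ι : Type*} [Finite ι] {p : ι → Prop} (f : ι → ℝ)
    (hp : ∃ i, p i) : ∃ i, p i ∧ sInf {r : ℝ | ∃ i, p i ∧ r = f i} = f i :=
  Set.Nonempty.csInf_mem (s := {r : ℝ | ∃ i, p i ∧ r = f i}) (let ⟨i, hi⟩ := hp; ⟨_, i, hi, rfl⟩)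
    (finite_setOf_exists_and_eq p f)

/-- The max-plus product `(B x)_i`, so that `dshapley A B x j = min_i (-A_{ij} + (B x)_i)`. -/
def maxPlusApply (B : Fin m → Fin n → WithBot ℝ) (x : Fin n → ℝ) (i : Fin m) : ℝ :=
  sSup {s : ℝ | ∃ h, B i h ≠ ⊥ ∧ s = sval (B i h) + x h}

section Shapley

variable {A B : Fin m → Fin n → WithBot ℝ} (x : Fin n → ℝ)

lemma le_maxPlusApply {i : Fin m} {h : Fin n} (hb : B i h ≠ ⊥) :
    sval (B i h) + x h ≤ maxPlusApply B x i :=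
  le_csSup (finite_setOf_exists_and_eq _ _).bddAbove ⟨h, hb, rfl⟩

lemma exists_maxPlusApply_eq {i : Fin m} (hB : ∃ h, B i h ≠ ⊥) :
    ∃ h, B i h ≠ ⊥ ∧ maxPlusApply B x i = sval (B i h) + x h :=
  exists_sSup_setOf_exists_and_eq _ hB

lemma dshapley_le {i : Fin m} {j : Fin n} (ha : A i j ≠ ⊥) :
    dshapley A B x j ≤ - sval (A i j) + maxPlusApply B x i :=
  csInf_le (finite_setOf_exists_and_eq _ _).bddBelow ⟨i, ha, rfl⟩

lemma exists_dshapley_eq {j : Fin n} (hA : ∃ i, A i j ≠ ⊥) :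
    ∃ i, A i j ≠ ⊥ ∧ dshapley A B x j = - sval (A i j) + maxPlusApply B x i :=
  exists_sInf_setOf_exists_and_eq _ hA

theorem dshapley_comp_of_min_le_sub (hAcol : ∀ j, ∃ i, A i j ≠ ⊥) (hBrow : ∀ i, ∃ h, B i h ≠ ⊥)
    {ρ K : ℝ} (hK : ∀ i j h, A i j ≠ ⊥ → B i h ≠ ⊥ → |ρ + sval (A i j) - sval (B i h)| ≤ K)
    {u : Fin n → ℝ} (hu : dshapley A B u = fun j => ρ + u j) {φ : ℝ → ℝ}
    (hφ : ∀ j h, min K (u j - u h) ≤ φ (u j) - φ (u h)) :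
    dshapley A B (φ ∘ u) = fun j => ρ + (φ ∘ u) j := by
  funext j
  apply le_antisymm
  · obtain ⟨i, ha, hi⟩ := exists_dshapley_eq (B := B) u (hAcol j)
    obtain ⟨h, hb, hh⟩ := exists_maxPlusApply_eq (φ ∘ u) (hBrow i)
    have hgap : sval (B i h) - ρ - sval (A i j) ≤ min K (u j - u h) :=
      le_min (by linarith [(abs_le.1 (hK i j h ha hb)).1])
        (by linarith [congrFun hu j, le_maxPlusApply u hb])
    calc dshapley A B (φ ∘ u) j ≤ - sval (A i j) + maxPlusApply B (φ ∘ u) i := dshapley_le _ ha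
      _ ≤ ρ + φ (u j) := by rw [hh, Function.comp_apply]; linarith [hφ j h]
  · obtain ⟨i, ha, hi⟩ := exists_dshapley_eq (B := B) (φ ∘ u) (hAcol j)
    obtain ⟨h, hb, hh⟩ := exists_maxPlusApply_eq u (hBrow i)
    have hgap : ρ + sval (A i j) - sval (B i h) ≤ min K (u h - u j) :=
      le_min (abs_le.1 (hK i j h ha hb)).2 (by linarith [congrFun hu j, dshapley_le (B := B) u ha])
    have hmax : sval (B i h) + φ (u h) ≤ maxPlusApply B (φ ∘ u) i := le_maxPlusApply (φ ∘ u) hb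
    calc ρ + φ (u j) ≤ - sval (A i j) + (sval (B i h) + φ (u h)) := by linarith [hφ h j]
      _ ≤ dshapley A B (φ ∘ u) j := by rw [hi]; linarith

lemma abs_sval_sub_sval_le_maxW {i : Fin m} {j h : Fin n} (ha : A i j ≠ ⊥) (hb : B i h ≠ ⊥) :
    |sval (A i j) - sval (B i h)| ≤ maxW A B := by
  refine le_csSup (Set.Finite.bddAbove ?_) ⟨i, j, h, ha, hb, rfl⟩
  refine (finite_range fun p : Fin m × Fin n × Fin n =>
    |sval (A p.1 p.2.1) - sval (B p.1 p.2.2)|).subset ?_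
  rintro _ ⟨i, j, h, -, -, rfl⟩
  exact ⟨(i, j, h), rfl⟩

end Shapley

section Hilbert

variable [Nonempty (Fin n)]

lemma hnorm_nonneg (x : Fin n → ℝ) : 0 ≤ hnorm x :=
  sub_nonneg.2 (ciInf_le_ciSup (finite_range x).bddBelow (finite_range x).bddAbove)

lemma hnorm_le {x : Fin n → ℝ} {c : ℝ} (h : ∀ j k, x j - x k ≤ c) : hnorm x ≤ c := by
  rw [hnorm, sub_le_iff_le_add]
  exact ciSup_le fun j => sub_le_iff_le_add'.1 (le_ciInf fun k => by linarith [h j k])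

end Hilbert

def gapCover {ι : Type*} (u : ι → ℝ) (K : ℝ) : Set ℝ := ⋃ l, Ioc (u l) (u l + K)

def shrinkGaps {ι : Type*} (u : ι → ℝ) (K x : ℝ) : ℝ := volume.real (gapCover u K ∩ Iic x)

section GapShrinking

variable {ι : Type*} [Finite ι] (u : ι → ℝ) (K : ℝ)

lemma volume_gapCover_inter_ne_top (s : Set ℝ) : volume (gapCover u K ∩ s) ≠ ⊤ :=
  measure_ne_top_of_subset inter_subset_left
    (Bornology.isBounded_iUnion.2 fun _ => Metric.isBounded_Ioc _ _).measure_lt_top.ne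

lemma shrinkGaps_sub_shrinkGaps {a b : ℝ} (hab : a ≤ b) :
    shrinkGaps u K b - shrinkGaps u K a = volume.real (gapCover u K ∩ Ioc a b) := by
  have hsplit : gapCover u K ∩ Iic b = (gapCover u K ∩ Iic a) ∪ (gapCover u K ∩ Ioc a b) := by
    rw [← inter_union_distrib_left, Iic_union_Ioc_eq_Iic hab]
  rw [shrinkGaps, shrinkGaps, hsplit, measureReal_union _ _ (volume_gapCover_inter_ne_top u K _)
    (volume_gapCover_inter_ne_top u K _), add_sub_cancel_left]
  · exact Disjoint.inter_left' _ (Disjoint.inter_right' _ (Iic_disjoint_Ioc le_rfl))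
  · exact (MeasurableSet.iUnion fun _ => measurableSet_Ioc).inter measurableSet_Ioc

lemma shrinkGaps_sub_shrinkGaps_le {a b : ℝ} (hab : a ≤ b) :
    shrinkGaps u K b - shrinkGaps u K a ≤ b - a := by
  rw [shrinkGaps_sub_shrinkGaps u K hab]
  calc _ ≤ volume.real (Ioc a b) := measureReal_mono inter_subset_right measure_Ioc_lt_top.ne
    _ = b - a := by rw [Real.volume_real_Ioc, max_eq_left (sub_nonneg.2 hab)]

lemma min_le_shrinkGaps_sub (hK : 0 ≤ K) (j h : ι) :
    min K (u j - u h) ≤ shrinkGaps u K (u j) - shrinkGaps u K (u h) := by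
  rcases le_total (u h) (u j) with hle | hle
  · rw [shrinkGaps_sub_shrinkGaps u K hle]
    have hsub : Ioc (u h) (min (u h + K) (u j)) ⊆ gapCover u K ∩ Ioc (u h) (u j) :=
      fun x hx => ⟨mem_iUnion.2 ⟨h, hx.1, hx.2.trans (min_le_left _ _)⟩,
        hx.1, hx.2.trans (min_le_right _ _)⟩
    calc min K (u j - u h) = volume.real (Ioc (u h) (min (u h + K) (u j))) := by
          rw [Real.volume_real_Ioc, ← min_sub_sub_right, add_sub_cancel_left,
            max_eq_left (le_min hK (sub_nonneg.2 hle))]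
      _ ≤ _ := measureReal_mono hsub (volume_gapCover_inter_ne_top u K _)
  · have := shrinkGaps_sub_shrinkGaps_le u K hle
    have := min_le_right K (u j - u h)
    linarith

lemma shrinkGaps_sub_le [Fintype ι] (hK : 0 ≤ K) (j h : ι) :
    shrinkGaps u K (u j) - shrinkGaps u K (u h) ≤ ((Fintype.card ι : ℝ) - 1) * K := by
  set below := Finset.univ.filter fun l => u l < u j
  have hcard : (below.card : ℝ) ≤ (Fintype.card ι : ℝ) - 1 := by
    have : below.card < Fintype.card ι := Finset.card_lt_univ_of_notMem (x := j) (by simp [below])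
    have : (below.card : ℝ) + 1 ≤ Fintype.card ι := by exact_mod_cast this
    linarith
  rcases le_total (u h) (u j) with hle | hle
  · have hsub : gapCover u K ∩ Ioc (u h) (u j) ⊆ ⋃ l ∈ below, Ioc (u l) (u l + K) := by
      rintro x ⟨hx, -, hxj⟩
      obtain ⟨l, hl⟩ := mem_iUnion.1 hx
      exact mem_biUnion (by simpa [below] using hl.1.trans_le hxj) hl
    calc _ = volume.real (gapCover u K ∩ Ioc (u h) (u j)) := shrinkGaps_sub_shrinkGaps u K hle
      _ ≤ volume.real (⋃ l ∈ below, Ioc (u l) (u l + K)) :=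
          measureReal_mono hsub (measure_biUnion_lt_top below.finite_toSet
            fun _ _ => measure_Ioc_lt_top).ne
      _ ≤ ∑ l ∈ below, volume.real (Ioc (u l) (u l + K)) := measureReal_biUnion_finset_le _ _
      _ = below.card * K := by simp [Real.volume_real_Ioc, hK]
      _ ≤ _ := mul_le_mul_of_nonneg_right hcard hK
  · have hφ : shrinkGaps u K (u j) ≤ shrinkGaps u K (u h) := by
      linarith [shrinkGaps_sub_shrinkGaps u K hle, measureReal_nonneg (μ := volume)
        (s := gapCover u K ∩ Ioc (u j) (u h))]
    exact (sub_nonpos.2 hφ).trans (mul_nonneg ((Nat.cast_nonneg _).trans hcard) hK)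

end GapShrinking

theorem stmt14_general (A B : Fin m → Fin n → WithBot ℝ)
    (hAcol : ∀ j, ∃ i, A i j ≠ ⊥)
    (hBrow : ∀ i, ∃ h, B i h ≠ ⊥)
    (hWne : ∃ (i : Fin m) (j : Fin n) (h : Fin n), A i j ≠ ⊥ ∧ B i h ≠ ⊥)
    (v₀ : Fin n → ℝ) (ρ : ℝ)
    (hbias₀ : dshapley A B v₀ = fun j => ρ + v₀ j) :
    sInf {c : ℝ | ∃ u : Fin n → ℝ, dshapley A B u = (fun j => ρ + u j) ∧ c = hnorm u} ≤
      ((n : ℝ) - 1) * (|ρ| + maxW A B) := by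
  obtain ⟨i₀, j₀, h₀, ha₀, hb₀⟩ := hWne
  have : Nonempty (Fin n) := ⟨j₀⟩
  set K := |ρ| + maxW A B
  have hK0 : 0 ≤ K :=
    add_nonneg (abs_nonneg ρ) ((abs_nonneg _).trans (abs_sval_sub_sval_le_maxW ha₀ hb₀))
  have hK : ∀ i j h, A i j ≠ ⊥ → B i h ≠ ⊥ → |ρ + sval (A i j) - sval (B i h)| ≤ K :=
    fun i j h ha hb => by
      rw [add_sub_assoc]
      linarith [abs_add_le ρ (sval (A i j) - sval (B i h)), abs_sval_sub_sval_le_maxW ha hb]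
  have hbias := dshapley_comp_of_min_le_sub hAcol hBrow hK hbias₀ (min_le_shrinkGaps_sub v₀ K hK0)
  refine csInf_le_of_le ⟨0, ?_⟩ ⟨_, hbias, rfl⟩ (hnorm_le fun j k => ?_)
  · rintro _ ⟨u, -, rfl⟩
    exact hnorm_nonneg u
  · simpa using shrinkGaps_sub_le v₀ K hK0 j k

/-- For deterministic games, the minimal Hilbert seminorm of a bias vector is at most
`(n - 1)(|ρ| + W)`. -/
theorem stmt14 (A B : Fin m → Fin n → WithBot ℝ)
    (hAcol : ∀ j, ∃ i, A i j ≠ ⊥)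
    (hBrow : ∀ i, ∃ h, B i h ≠ ⊥)
    (hAint : ∀ i j, A i j = ⊥ ∨ ∃ z : ℤ, A i j = ((z : ℝ) : WithBot ℝ))
    (hBint : ∀ i h, B i h = ⊥ ∨ ∃ z : ℤ, B i h = ((z : ℝ) : WithBot ℝ))
    (hWne : ∃ (i : Fin m) (j : Fin n) (h : Fin n), A i j ≠ ⊥ ∧ B i h ≠ ⊥)
    (v₀ : Fin n → ℝ) (ρ : ℝ)
    (hbias₀ : dshapley A B v₀ = fun j => ρ + v₀ j) :
    sInf {c : ℝ | ∃ u : Fin n → ℝ, dshapley A B u = (fun j => ρ + u j) ∧ c = hnorm u} ≤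
      ((n : ℝ) - 1) * (|ρ| + maxW A B) :=
  stmt14_general A B hAcol hBrow hWne v₀ ρ hbias₀
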